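/- arXiv:2208.07151 — 2 statements merged into one kernel-verified Lean document; each statement's English description precedes it below -/
import Mathlib

section
/- The computation offloading game is an ordinal potential game with potential φ: for every user k and every pair of strategy profiles α, α' that agree at every coordinate n ≠ k, the sign of (φ α − φ α') equals the sign of (c k α − c k α'), where c k is the individual cost of user k. -/
/-!
Measure user `k`'s situation by its effective interference: the interference `Υ k α` from the
users sharing its channel when it offloads, and the threshold `V k` when it computes locally.
The offloading energy is a strictly increasing function of the interference, and `V k` is exactly
the interference at which offloading costs as much as local computing, so `c k α` is this
increasing function evaluated at the effective interference. On the other hand, when only user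
`k` moves, every pair of users not containing `k` contributes equally to `φ α` and `φ α'`, and
`φ α - φ α'` is `w k` times the change of the effective interference of `k`.
-/

open Finset

namespace Real

theorem sign_eq_sign_of_iff {x y : ℝ} (hneg : x < 0 ↔ y < 0) (hpos : 0 < x ↔ 0 < y) :
    sign x = sign y := by
  simp only [sign, hneg, hpos]

theorem sign_mul_of_pos {a : ℝ} (ha : 0 < a) (x : ℝ) : sign (a * x) = sign x :=
  sign_eq_sign_of_iff (by rw [← neg_pos, ← mul_neg, mul_pos_iff_of_pos_left ha, neg_pos])
    (mul_pos_iff_of_pos_left ha)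

end Real

theorem StrictMonoOn.real_sign_sub {s : Set ℝ} {f : ℝ → ℝ} (hf : StrictMonoOn f s)
    {x y : ℝ} (hx : x ∈ s) (hy : y ∈ s) : Real.sign (f x - f y) = Real.sign (x - y) :=
  Real.sign_eq_sign_of_iff (by rw [sub_neg, sub_neg, hf.lt_iff_lt hx hy])
    (by rw [sub_pos, sub_pos, hf.lt_iff_lt hy hx])

theorem Finset.sum_sum_erase_eq_two_nsmul {ι M : Type*} [Fintype ι] [DecidableEq ι]
    [AddCommMonoid M] {H : ι → ι → M} (k : ι) (hsymm : ∀ i j, H i j = H j i)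
    (hH : ∀ i j, i ≠ k → j ≠ k → H i j = 0) :
    ∑ i, ∑ j ∈ univ.erase i, H i j = 2 • ∑ j ∈ univ.erase k, H k j := by
  have hrow : ∀ i ∈ univ.erase k, ∑ j ∈ univ.erase i, H i j = H k i := by
    intro i hi
    have hik := ne_of_mem_erase hi
    rw [sum_eq_single_of_mem k (mem_erase.2 ⟨hik.symm, mem_univ k⟩)
      fun j hj hjk => hH i j hik hjk, hsymm]
  rw [← add_sum_erase univ _ (mem_univ k), sum_congr rfl hrow, two_nsmul]

/-- Energy `P / rate` of offloading, where `P` is transmit power times bits sent and the rate is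
`W log₂ (1 + w / (x + σ2))`, as a function of the interference `x`. -/
noncomputable def offloadingEnergy (P W w σ2 x : ℝ) : ℝ :=
  P / (W * Real.logb 2 (1 + w / (x + σ2)))

theorem strictMonoOn_offloadingEnergy {P W w σ2 : ℝ} (hP : 0 < P) (hW : 0 < W) (hw : 0 < w) :
    StrictMonoOn (offloadingEnergy P W w σ2) (Set.Ioi (-σ2)) := by
  intro x hx y hy hxy
  have hx' : 0 < x + σ2 := neg_lt_iff_pos_add.1 hx
  have hy' : 0 < y + σ2 := neg_lt_iff_pos_add.1 hy
  have hlog_pos : 0 < Real.logb 2 (1 + w / (y + σ2)) :=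
    Real.logb_pos one_lt_two (lt_add_of_pos_right 1 (div_pos hw hy'))
  have hlog_lt : Real.logb 2 (1 + w / (y + σ2)) < Real.logb 2 (1 + w / (x + σ2)) :=
    Real.logb_lt_logb one_lt_two (by positivity) (by gcongr)
  exact div_lt_div_of_pos_left hP (by positivity) (by gcongr)

/-- The interference at which offloading costs exactly `E`. -/
noncomputable def offloadingThreshold (P W w σ2 E : ℝ) : ℝ :=
  w / (2 ^ (P / (W * E)) - 1) - σ2

theorem neg_lt_offloadingThreshold {P W w σ2 E : ℝ} (hP : 0 < P) (hW : 0 < W) (hw : 0 < w)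
    (hE : 0 < E) : -σ2 < offloadingThreshold P W w σ2 E := by
  rw [offloadingThreshold, sub_eq_add_neg, lt_add_iff_pos_left]
  exact div_pos hw (sub_pos.2 (Real.one_lt_rpow one_lt_two (by positivity)))

theorem offloadingEnergy_offloadingThreshold {P W w σ2 E : ℝ} (hP : 0 < P) (hW : 0 < W)
    (hw : w ≠ 0) (hE : 0 < E) :
    offloadingEnergy P W w σ2 (offloadingThreshold P W w σ2 E) = E := by
  have h2 : (2 : ℝ) ^ (P / (W * E)) - 1 ≠ 0 :=
    (sub_pos.2 (Real.one_lt_rpow one_lt_two (by positivity))).ne'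
  have hrate : w / (offloadingThreshold P W w σ2 E + σ2) = 2 ^ (P / (W * E)) - 1 := by
    rw [offloadingThreshold, sub_add_cancel]
    field_simp
  rw [offloadingEnergy, hrate, add_sub_cancel, Real.logb_rpow two_pos (by norm_num)]
  field_simp

section Potential

variable {ι : Type*} {M : ℕ}

def congestionTerm (w : ι → ℝ) (α : ι → Fin (M + 1)) (i n : ι) : ℝ :=
  w i * w n * (if α n = α i then 1 else 0) * (if 0 < α i then 1 else 0)

theorem congestionTerm_comm (w : ι → ℝ) (α : ι → Fin (M + 1)) (i n : ι) :
    congestionTerm w α i n = congestionTerm w α n i := by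
  by_cases h : α n = α i
  · simp only [congestionTerm, h, if_true]
    ring
  · simp [congestionTerm, h, Ne.symm h]

variable [Fintype ι] [DecidableEq ι]

def interference (w : ι → ℝ) (k : ι) (α : ι → Fin (M + 1)) : ℝ :=
  ∑ n ∈ (univ.erase k).filter (fun n => α n = α k), w n

def effectiveInterference (w V : ι → ℝ) (k : ι) (α : ι → Fin (M + 1)) : ℝ :=
  if α k = 0 then V k else interference w k α

noncomputable def offloadingPotential (w V : ι → ℝ) (α : ι → Fin (M + 1)) : ℝ :=
  (1 / 2) * ∑ k, ∑ n ∈ univ.erase k, congestionTerm w α k n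
    + ∑ k, w k * V k * (if α k = 0 then 1 else 0)

theorem sum_congestionTerm (w : ι → ℝ) (α : ι → Fin (M + 1)) (k : ι) :
    ∑ n ∈ univ.erase k, congestionTerm w α k n
      = w k * (if 0 < α k then 1 else 0) * interference w k α := by
  rw [interference, sum_filter, mul_sum]
  refine sum_congr rfl fun n _ => ?_
  unfold congestionTerm
  split_ifs <;> ring

theorem offloadingPotential_sub (w V : ι → ℝ) {α α' : ι → Fin (M + 1)} (k : ι)
    (hdev : ∀ n, n ≠ k → α n = α' n) :
    offloadingPotential w V α - offloadingPotential w V α'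
      = w k * (effectiveInterference w V k α - effectiveInterference w V k α') := by
  have hpairs : ∑ i, ∑ n ∈ univ.erase i, congestionTerm w α i n
      - ∑ i, ∑ n ∈ univ.erase i, congestionTerm w α' i n
      = 2 • (∑ n ∈ univ.erase k, congestionTerm w α k n
        - ∑ n ∈ univ.erase k, congestionTerm w α' k n) := by
    simp only [← sum_sub_distrib]
    exact sum_sum_erase_eq_two_nsmul k
      (fun i j => by rw [congestionTerm_comm w α, congestionTerm_comm w α'])
      (fun i j hi hj => by simp [congestionTerm, hdev i hi, hdev j hj])
  have hlocal : ∑ i, w i * V i * (if α i = 0 then (1 : ℝ) else 0)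
      - ∑ i, w i * V i * (if α' i = 0 then (1 : ℝ) else 0)
      = w k * V k * (if α k = 0 then 1 else 0) - w k * V k * (if α' k = 0 then 1 else 0) := by
    rw [← sum_sub_distrib, sum_eq_single k (fun i _ hi => by rw [hdev i hi, sub_self]) (by simp)]
  calc offloadingPotential w V α - offloadingPotential w V α'
      = (1 / 2) * (∑ i, ∑ n ∈ univ.erase i, congestionTerm w α i n
          - ∑ i, ∑ n ∈ univ.erase i, congestionTerm w α' i n)
        + (∑ i, w i * V i * (if α i = 0 then (1 : ℝ) else 0)
          - ∑ i, w i * V i * (if α' i = 0 then (1 : ℝ) else 0)) := by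
        unfold offloadingPotential
        ring
    _ = w k * (effectiveInterference w V k α - effectiveInterference w V k α') := by
        rw [hpairs, hlocal, two_nsmul, sum_congestionTerm, sum_congestionTerm]
        unfold effectiveInterference
        split_ifs <;> simp_all [Fin.pos_iff_ne_zero] <;> ring

theorem effectiveInterference_mem_Ioi {w V : ι → ℝ} {σ2 : ℝ} (hσ : 0 < σ2)
    (hw : ∀ n, 0 ≤ w n) {k : ι} (hV : -σ2 < V k) (α : ι → Fin (M + 1)) :
    effectiveInterference w V k α ∈ Set.Ioi (-σ2) := by
  unfold effectiveInterference
  split_ifs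
  · exact hV
  · exact (neg_neg_of_pos hσ).trans_le (sum_nonneg fun n _ => hw n)

end Potential

/-- The computation offloading game is an ordinal potential game with
potential `φ`: for every unilateral deviation of any user `k`, the sign of the
potential change equals the sign of the change in the cost of `k`. -/
theorem ordinal_potential_game
    (K M : ℕ) (B σ2 τ ζ : ℝ)
    (hB : 0 < B) (hσ : 0 < σ2) (hτ : 0 < τ) (hζ : 0 < ζ)
    (p h I D S : Fin K → ℝ)
    (hp : ∀ k, 0 < p k) (hh : ∀ k, 0 < h k) (hI : ∀ k, 0 < I k)
    (hD : ∀ k, 0 < D k) (hS : ∀ k, 0 < S k)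
    (b : Fin K → ℝ) (hb : ∀ k, b k = 0 ∨ b k = 1)
    (w : Fin K → ℝ) (hw : ∀ k, w k = p k * h k)
    (Υ : Fin K → (Fin K → Fin (M + 1)) → ℝ)
    (hΥ : ∀ k α, Υ k α =
      ∑ n ∈ (Finset.univ.erase k).filter (fun n => α n = α k), w n)
    (r : Fin K → (Fin K → Fin (M + 1)) → ℝ)
    (hr : ∀ k α, r k α = (B / (M : ℝ)) * Real.logb 2 (1 + w k / (Υ k α + σ2)))
    (EL : Fin K → ℝ) (hEL : ∀ k, EL k = ζ * S k ^ 3 / τ ^ 2)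
    (EO : Fin K → (Fin K → Fin (M + 1)) → ℝ)
    (hEO : ∀ k α, EO k α = p k * (I k + (1 - b k) * D k) / r k α)
    (c : Fin K → (Fin K → Fin (M + 1)) → ℝ)
    (hc : ∀ k α, c k α = if α k = 0 then EL k else EO k α)
    (V : Fin K → ℝ)
    (hV : ∀ k, V k = w k /
        ((2 : ℝ) ^ (p k * τ ^ 2 * (M : ℝ) * (I k + (1 - b k) * D k) / (B * ζ * S k ^ 3)) - 1)
      - σ2)
    (φ : (Fin K → Fin (M + 1)) → ℝ)
    (hφ : ∀ α, φ α =
      (1 / 2) * ∑ k : Fin K, ∑ n ∈ Finset.univ.erase k,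
          w k * w n * (if α n = α k then (1 : ℝ) else 0) * (if 0 < α k then (1 : ℝ) else 0)
      + ∑ k : Fin K, w k * V k * (if α k = 0 then (1 : ℝ) else 0))
    :
    ∀ (k : Fin K) (α α' : Fin K → Fin (M + 1)),
      (∀ n, n ≠ k → α n = α' n) →
      Real.sign (φ α - φ α') = Real.sign (c k α - c k α') := by
  intro k α α' hdev
  rcases Nat.eq_zero_or_pos M with rfl | hM
  · rw [show α = α' from funext fun n => Subsingleton.elim (α := Fin 1) _ _, sub_self, sub_self]
  obtain rfl : Υ = interference w := funext₂ hΥ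
  obtain rfl : φ = offloadingPotential w V := funext hφ
  have hwpos : ∀ n, 0 < w n := fun n => hw n ▸ mul_pos (hp n) (hh n)
  set P := p k * (I k + (1 - b k) * D k) with hPdef
  have hP : 0 < P := by
    rcases hb k with hbk | hbk <;> simp only [hPdef, hbk] <;> nlinarith [hp k, hI k, hD k]
  have hW : 0 < B / M := div_pos hB (Nat.cast_pos.2 hM)
  have hE : 0 < EL k := hEL k ▸ by have := hS k; positivity
  have hVk : V k = offloadingThreshold P (B / M) (w k) σ2 (EL k) := by
    have hexp : p k * τ ^ 2 * M * (I k + (1 - b k) * D k) / (B * ζ * S k ^ 3)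
        = P / (B / M * EL k) := by
      rw [hEL, hPdef]
      have := hS k
      field_simp
    rw [hV, hexp, offloadingThreshold]
  have hcost : ∀ β, c k β =
      offloadingEnergy P (B / M) (w k) σ2 (effectiveInterference w V k β) := by
    intro β
    rw [hc, effectiveInterference]
    split_ifs
    · rw [hVk, offloadingEnergy_offloadingThreshold hP hW (hwpos k).ne' hE]
    · rw [hEO, hr]
      rfl
  have hmem (β : Fin K → Fin (M + 1)) :=
    effectiveInterference_mem_Ioi hσ (fun n => (hwpos n).le)
      (hVk ▸ neg_lt_offloadingThreshold hP hW (hwpos k) hE) β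
  rw [offloadingPotential_sub w V k hdev, hcost, hcost, Real.sign_mul_of_pos (hwpos k),
    (strictMonoOn_offloadingEnergy hP hW (hwpos k)).real_sign_sub (hmem α) (hmem α')]
end

section
/- Best-response dynamics converges in finitely many steps: if α⁰, α¹, …, α^T is a sequence of strategy profiles such that for each t there is a user k_t with α^{t+1} agreeing with α^t at every coordinate other than k_t and c k_t α^{t+1} < c k_t α^t, then T + 1 ≤ (M + 1) ^ K; in particular there is no infinite such improvement sequence. -/
/-!
Improvement paths are finite because the game has an exact weighted potential, the paper's `φ`
(`Offloading.potential`). Let `X k α`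
be user `k`'s interference `Υ k α` when it offloads and its threshold `V k` when it computes
locally. User `k`'s cost is a strictly increasing function of `X k α`, and when only user `k`
moves, `φ` changes by exactly `w k` times the change of `X k`. Hence every strict unilateral
improvement strictly decreases `φ`, so the profiles along an improvement path are pairwise
distinct, and there are only `(M + 1) ^ K` profiles.
-/

open Finset Real

theorem add_one_le_card_of_map_succ_lt {X β : Type*} [Fintype X] [Preorder β] (Φ : X → β)
    {α : ℕ → X} {T : ℕ} (h : ∀ t < T, Φ (α (t + 1)) < Φ (α t)) :
    T + 1 ≤ Fintype.card X := by
  have hinj : Set.InjOn α (range (T + 1)) := by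
    refine ((strictAntiOn_Iic_of_succ_lt (ψ := Φ ∘ α) h).injOn).of_comp.mono fun t => ?_
    simp
  simpa using card_le_card_of_injOn α (fun _ _ => mem_univ _) hinj

theorem sum_sum_erase_sub_sum_sum_erase {ι : Type*} [Fintype ι] [DecidableEq ι]
    {F G : ι → ι → ℝ} (hF : ∀ i j, F i j = F j i) (hG : ∀ i j, G i j = G j i) {k : ι}
    (hFG : ∀ i j, i ≠ k → j ≠ k → F i j = G i j) :
    ∑ i, ∑ j ∈ univ.erase i, F i j - ∑ i, ∑ j ∈ univ.erase i, G i j =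
      2 * ∑ j ∈ univ.erase k, (F k j - G k j) := by
  have hcol : ∀ i ∈ univ.erase k, ∑ j ∈ univ.erase i, (F i j - G i j) = F k i - G k i := by
    intro i hi
    have hik : i ≠ k := ne_of_mem_erase hi
    rw [sum_eq_single_of_mem k (mem_erase.2 ⟨hik.symm, mem_univ k⟩), hF, hG]
    intro j _ hjk
    rw [hFG i j hik hjk, sub_self]
  simp only [← sum_sub_distrib]
  rw [← add_sum_erase _ _ (mem_univ k), sum_congr rfl hcol]
  ring

theorem sum_sub_sum_eq_sub_of_forall_ne {ι : Type*} [Fintype ι] [DecidableEq ι]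
    {f g : ι → ℝ} {k : ι} (hfg : ∀ i ≠ k, f i = g i) :
    ∑ i, f i - ∑ i, g i = f k - g k := by
  rw [← add_sum_erase _ _ (mem_univ k), ← add_sum_erase _ g (mem_univ k),
    sum_congr rfl fun i hi => hfg i (ne_of_mem_erase hi)]
  ring

namespace Offloading

theorem strictMonoOn_div_mul_logb {a R w σ2 : ℝ} (ha : 0 < a) (hR : 0 < R) (hw : 0 < w) :
    StrictMonoOn (fun u => a / (R * logb 2 (1 + w / (u + σ2)))) (Set.Ioi (-σ2)) := by
  intro u hu v hv huv
  have hu' : 0 < u + σ2 := neg_lt_iff_pos_add.1 hu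
  have hv' : 0 < v + σ2 := neg_lt_iff_pos_add.1 hv
  have hsinr : w / (v + σ2) < w / (u + σ2) := div_lt_div_of_pos_left hw hu' (by linarith)
  have hlog : logb 2 (1 + w / (v + σ2)) < logb 2 (1 + w / (u + σ2)) :=
    logb_lt_logb one_lt_two (by positivity) (by linarith)
  have hpos : 0 < logb 2 (1 + w / (v + σ2)) := logb_pos one_lt_two (by linarith [div_pos hw hv'])
  exact div_lt_div_of_pos_left ha (mul_pos hR hpos) (mul_lt_mul_of_pos_left hlog hR)

/- With `x = p L / ((B / M) E_L)` this makes the threshold `V k` the interference at which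
offloading costs exactly the local energy `E_L k`. -/
theorem logb_one_add_div_threshold {w x σ2 : ℝ} (hw : w ≠ 0) :
    logb 2 (1 + w / (w / (2 ^ x - 1) - σ2 + σ2)) = x := by
  rw [sub_add_cancel, div_div_cancel₀ hw, add_sub_cancel, logb_rpow two_pos (by norm_num)]

theorem neg_lt_threshold {w x σ2 : ℝ} (hw : 0 < w) (hx : 0 < x) :
    -σ2 < w / (2 ^ x - 1) - σ2 := by
  have : 0 < w / ((2 : ℝ) ^ x - 1) := div_pos hw (sub_pos.2 (one_lt_rpow one_lt_two hx))
  linarith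

variable {ι A : Type*} [DecidableEq A] [Zero A]

def coChannelWeight (w : ι → ℝ) (α : ι → A) (i j : ι) : ℝ :=
  if α j = α i ∧ α i ≠ 0 then w i * w j else 0

def localWeight (w V : ι → ℝ) (α : ι → A) (i : ι) : ℝ :=
  if α i = 0 then w i * V i else 0

theorem coChannelWeight_comm (w : ι → ℝ) (α : ι → A) (i j : ι) :
    coChannelWeight w α i j = coChannelWeight w α j i := by
  unfold coChannelWeight
  by_cases h : α j = α i
  · simp only [h, mul_comm]
  · simp only [h, Ne.symm h, false_and, if_false]

variable [Fintype ι] [DecidableEq ι]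

def interference (w : ι → ℝ) (α : ι → A) (k : ι) : ℝ :=
  ∑ n ∈ univ.erase k with α n = α k, w n

def effectiveInterference (w V : ι → ℝ) (α : ι → A) (k : ι) : ℝ :=
  if α k = 0 then V k else interference w α k

noncomputable def potential (w V : ι → ℝ) (α : ι → A) : ℝ :=
  (1 / 2) * ∑ i, ∑ j ∈ univ.erase i, coChannelWeight w α i j + ∑ i, localWeight w V α i

theorem sum_erase_coChannelWeight_add_localWeight (w V : ι → ℝ) (α : ι → A) (k : ι) :
    ∑ j ∈ univ.erase k, coChannelWeight w α k j + localWeight w V α k =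
      w k * effectiveInterference w V α k := by
  unfold coChannelWeight localWeight effectiveInterference interference
  by_cases h : α k = 0
  · simp [h]
  · simp only [h, if_false, ne_eq, not_false_eq_true, and_true, add_zero, sum_filter, mul_sum,
      mul_ite, mul_zero]

theorem potential_sub_potential {w : ι → ℝ} (V : ι → ℝ) {α α' : ι → A} {k : ι}
    (hα : ∀ n ≠ k, α' n = α n) :
    potential w V α' - potential w V α =
      w k * (effectiveInterference w V α' k - effectiveInterference w V α k) := by
  have hpair := sum_sum_erase_sub_sum_sum_erase (coChannelWeight_comm w α')
    (coChannelWeight_comm w α) (k := k) fun i j hi hj => by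
      simp only [coChannelWeight, hα i hi, hα j hj]
  have hloc := sum_sub_sum_eq_sub_of_forall_ne (f := localWeight w V α')
    (g := localWeight w V α) (k := k) fun i hi => by simp only [localWeight, hα i hi]
  rw [mul_sub, ← sum_erase_coChannelWeight_add_localWeight,
    ← sum_erase_coChannelWeight_add_localWeight]
  unfold potential
  rw [sum_sub_distrib] at hpair
  linear_combination (1 / 2 : ℝ) * hpair + hloc

theorem potential_lt_of_cost_lt {w V : ι → ℝ} {c : (ι → A) → ℝ} {g : ℝ → ℝ} {s : Set ℝ}
    {k : ι} (hg : StrictMonoOn g s) (hc : ∀ α : ι → A, c α = g (effectiveInterference w V α k))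
    (hs : ∀ α : ι → A, effectiveInterference w V α k ∈ s) (hwk : 0 < w k) {α α' : ι → A}
    (hα : ∀ n ≠ k, α' n = α n) (hlt : c α' < c α) :
    potential w V α' < potential w V α := by
  rw [hc, hc, hg.lt_iff_lt (hs α') (hs α)] at hlt
  have hdiff := potential_sub_potential V hα (w := w)
  linarith [mul_neg_of_pos_of_neg hwk (sub_neg.2 hlt)]

theorem neg_lt_effectiveInterference {w V : ι → ℝ} {σ2 : ℝ} {k : ι} (hσ : 0 < σ2)
    (hw : ∀ n, 0 ≤ w n) (hV : -σ2 < V k) (α : ι → A) :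
    -σ2 < effectiveInterference w V α k := by
  unfold effectiveInterference interference
  split_ifs
  · exact hV
  · exact (neg_neg_of_pos hσ).trans_le (sum_nonneg fun n _ => hw n)

theorem cost_eq_offloadEnergy {M : ℕ} (hM : M ≠ 0) {B σ2 τ ζ p L S EL : ℝ} (hB : B ≠ 0)
    (hτ : τ ≠ 0) (hζ : ζ ≠ 0) (hp : p ≠ 0) (hL : L ≠ 0) (hS : S ≠ 0) {w V : ι → ℝ} {k : ι}
    (hwk : w k ≠ 0) {Υ r EO c : (ι → Fin (M + 1)) → ℝ}
    (hΥ : ∀ α, Υ α = ∑ n ∈ (univ.erase k).filter (fun n => α n = α k), w n)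
    (hr : ∀ α, r α = (B / (M : ℝ)) * logb 2 (1 + w k / (Υ α + σ2)))
    (hEL : EL = ζ * S ^ 3 / τ ^ 2) (hEO : ∀ α, EO α = p * L / r α)
    (hc : ∀ α, c α = if α k = 0 then EL else EO α)
    (hV : V k = w k / ((2 : ℝ) ^ (p * τ ^ 2 * (M : ℝ) * L / (B * ζ * S ^ 3)) - 1) - σ2)
    (α : ι → Fin (M + 1)) :
    c α = p * L / (B / M * logb 2 (1 + w k / (effectiveInterference w V α k + σ2))) := by
  rw [hc, effectiveInterference]
  by_cases h0 : α k = 0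
  · rw [if_pos h0, if_pos h0, hV, logb_one_add_div_threshold hwk, hEL]
    field_simp
  · rw [if_neg h0, if_neg h0, hEO, hr, hΥ, interference]

end Offloading

theorem improvement_dynamics_finite_general
    (K M : ℕ) (B σ2 τ ζ : ℝ)
    (hB : 0 < B) (hσ : 0 < σ2) (hτ : 0 < τ) (hζ : 0 < ζ)
    (p h I D S : Fin K → ℝ)
    (hp : ∀ k, 0 < p k) (hh : ∀ k, 0 < h k) (hI : ∀ k, 0 < I k)
    (hD : ∀ k, 0 < D k) (hS : ∀ k, 0 < S k)
    (b : Fin K → ℝ) (hb : ∀ k, b k = 0 ∨ b k = 1)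
    (w : Fin K → ℝ) (hw : ∀ k, w k = p k * h k)
    (Υ : Fin K → (Fin K → Fin (M + 1)) → ℝ)
    (hΥ : ∀ k α, Υ k α =
      ∑ n ∈ (Finset.univ.erase k).filter (fun n => α n = α k), w n)
    (r : Fin K → (Fin K → Fin (M + 1)) → ℝ)
    (hr : ∀ k α, r k α = (B / (M : ℝ)) * Real.logb 2 (1 + w k / (Υ k α + σ2)))
    (EL : Fin K → ℝ) (hEL : ∀ k, EL k = ζ * S k ^ 3 / τ ^ 2)
    (EO : Fin K → (Fin K → Fin (M + 1)) → ℝ)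
    (hEO : ∀ k α, EO k α = p k * (I k + (1 - b k) * D k) / r k α)
    (c : Fin K → (Fin K → Fin (M + 1)) → ℝ)
    (hc : ∀ k α, c k α = if α k = 0 then EL k else EO k α)
    (V : Fin K → ℝ)
    (hV : ∀ k, V k = w k /
        ((2 : ℝ) ^ (p k * τ ^ 2 * (M : ℝ) * (I k + (1 - b k) * D k) / (B * ζ * S k ^ 3)) - 1)
      - σ2)
    (α : ℕ → Fin K → Fin (M + 1)) (T : ℕ)
    (himp : ∀ t, t < T → ∃ kt : Fin K,
      (∀ n, n ≠ kt → α (t + 1) n = α t n) ∧ c kt (α (t + 1)) < c kt (α t)) :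
    T + 1 ≤ (M + 1) ^ K := by
  have hw_pos : ∀ k, 0 < w k := fun k => hw k ▸ mul_pos (hp k) (hh k)
  have hL : ∀ k, 0 < I k + (1 - b k) * D k := fun k =>
    add_pos_of_pos_of_nonneg (hI k) (mul_nonneg (by rcases hb k with h | h <;> simp [h]) (hD k).le)
  have hdecr : ∀ t < T, Offloading.potential w V (α (t + 1)) < Offloading.potential w V (α t) := by
    intro t ht
    obtain ⟨k, hagree, hlt⟩ := himp t ht
    have hM : M ≠ 0 := by
      rintro rfl
      exact hlt.ne (congrArg (c k) (funext fun n => Subsingleton.elim (α := Fin 1) _ _))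
    have hM_pos : (0 : ℝ) < M := by positivity
    have hV_gt : -σ2 < V k := hV k ▸ Offloading.neg_lt_threshold (hw_pos k) (div_pos
      (mul_pos (mul_pos (mul_pos (hp k) (pow_pos hτ 2)) hM_pos) (hL k))
      (mul_pos (mul_pos hB hζ) (pow_pos (hS k) 3)))
    exact Offloading.potential_lt_of_cost_lt
      (Offloading.strictMonoOn_div_mul_logb (mul_pos (hp k) (hL k)) (div_pos hB hM_pos) (hw_pos k))
      (Offloading.cost_eq_offloadEnergy hM hB.ne' hτ.ne' hζ.ne' (hp k).ne' (hL k).ne' (hS k).ne'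
        (hw_pos k).ne' (hΥ k) (hr k) (hEL k) (hEO k) (hc k) (hV k))
      (Offloading.neg_lt_effectiveInterference hσ (fun n => (hw_pos n).le) hV_gt)
      (hw_pos k) hagree hlt
  simpa using add_one_le_card_of_map_succ_lt _ hdecr

/-- Best-response (improvement) dynamics converges in finitely many
steps: any strict improvement sequence of strategy profiles has length at most
`(M + 1) ^ K`. -/
theorem improvement_dynamics_finite
    (K M : ℕ) (B σ2 τ ζ : ℝ)
    (hB : 0 < B) (hσ : 0 < σ2) (hτ : 0 < τ) (hζ : 0 < ζ)
    (p h I D S : Fin K → ℝ)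
    (hp : ∀ k, 0 < p k) (hh : ∀ k, 0 < h k) (hI : ∀ k, 0 < I k)
    (hD : ∀ k, 0 < D k) (hS : ∀ k, 0 < S k)
    (b : Fin K → ℝ) (hb : ∀ k, b k = 0 ∨ b k = 1)
    (w : Fin K → ℝ) (hw : ∀ k, w k = p k * h k)
    (Υ : Fin K → (Fin K → Fin (M + 1)) → ℝ)
    (hΥ : ∀ k α, Υ k α =
      ∑ n ∈ (Finset.univ.erase k).filter (fun n => α n = α k), w n)
    (r : Fin K → (Fin K → Fin (M + 1)) → ℝ)
    (hr : ∀ k α, r k α = (B / (M : ℝ)) * Real.logb 2 (1 + w k / (Υ k α + σ2)))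
    (EL : Fin K → ℝ) (hEL : ∀ k, EL k = ζ * S k ^ 3 / τ ^ 2)
    (EO : Fin K → (Fin K → Fin (M + 1)) → ℝ)
    (hEO : ∀ k α, EO k α = p k * (I k + (1 - b k) * D k) / r k α)
    (c : Fin K → (Fin K → Fin (M + 1)) → ℝ)
    (hc : ∀ k α, c k α = if α k = 0 then EL k else EO k α)
    (V : Fin K → ℝ)
    (hV : ∀ k, V k = w k /
        ((2 : ℝ) ^ (p k * τ ^ 2 * (M : ℝ) * (I k + (1 - b k) * D k) / (B * ζ * S k ^ 3)) - 1)
      - σ2)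
    (φ : (Fin K → Fin (M + 1)) → ℝ)
    (hφ : ∀ α, φ α =
      (1 / 2) * ∑ k : Fin K, ∑ n ∈ Finset.univ.erase k,
          w k * w n * (if α n = α k then (1 : ℝ) else 0) * (if 0 < α k then (1 : ℝ) else 0)
      + ∑ k : Fin K, w k * V k * (if α k = 0 then (1 : ℝ) else 0))
    (α : ℕ → Fin K → Fin (M + 1)) (T : ℕ)
    (himp : ∀ t, t < T → ∃ kt : Fin K,
      (∀ n, n ≠ kt → α (t + 1) n = α t n) ∧ c kt (α (t + 1)) < c kt (α t)) :
    T + 1 ≤ (M + 1) ^ K :=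
  improvement_dynamics_finite_general K M B σ2 τ ζ hB hσ hτ hζ p h I D S hp hh hI hD hS b hb w hw Υ
    hΥ r hr EL hEL EO hEO c hc V hV α T himp
end
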